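/- Let e ≥ 2 be even and let ω = 2^(1/e) in the ring O = Z_2[2^(1/e)]. Then 2ω = ω^(e+1) cannot be written as the sum of two squares of elements of O. -/

import Mathlib

open Polynomial

/-- The ring `ℤ_2[2^(1/e)]`, realized as `ℤ_[2][X]/(Xᵉ - 2)`. -/
noncomputable abbrev Z2RootTwo (e : ℕ) : Type := AdjoinRoot ((X : ℤ_[2][X]) ^ e - C 2)

private lemma zmod8_exists_half (a : ZMod 8)
    (h : ZMod.castHom (by norm_num : (2:ℕ) ∣ 8) (ZMod 2) a = 0) : ∃ b : ZMod 8, a = 2 * b := by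
  revert h; revert a; decide

private lemma zmod8_exists_quarter (a : ZMod 8) (h : 2 * a = 0) : ∃ b : ZMod 8, a = 4 * b := by
  revert h; revert a; decide

private lemma exists_decomp : ∀ (k : ℕ) (s : (ZMod 8)[X]),
    (∀ i, i < k → ∃ b, s.coeff i = 2 * b) → ∃ t u, s = X ^ k * t + 2 * u := by
  intro k
  induction k with
  | zero => exact fun s _ => ⟨s, 0, by simp⟩
  | succ k ih =>
    intro s hs
    obtain ⟨t, u, rfl⟩ := ih s (fun i hi => hs i (hi.trans (Nat.lt_succ_self k)))
    obtain ⟨b, hb⟩ := hs k (Nat.lt_succ_self k)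
    have hc : (X ^ k * t + 2 * u).coeff k = t.coeff 0 + 2 * u.coeff k := by
      have h1 : (X ^ k * t).coeff (0 + k) = t.coeff 0 := coeff_X_pow_mul t k 0
      simp only [coeff_add, Nat.zero_add] at h1 ⊢
      rw [h1]
      congr 1
      have : (2 : (ZMod 8)[X]) = C 2 := (map_ofNat (C : ZMod 8 →+* _) 2).symm
      rw [this, coeff_C_mul]
    have ht0 : t.coeff 0 = 2 * (b - u.coeff k) := by
      have := hb; rw [hc] at this; ring_nf; ring_nf at this; linear_combination this
    refine ⟨t.divX, C (b - u.coeff k) * X ^ k + u, ?_⟩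
    conv_lhs => rw [← X_mul_divX_add t, ht0]
    have hCC : (C (2 * (b - u.coeff k)) : (ZMod 8)[X]) = 2 * C (b - u.coeff k) := by
      rw [C_mul, map_ofNat (C : ZMod 8 →+* _) 2]
    rw [hCC]
    ring

private lemma two_torsion (e : ℕ) (he : e ≠ 0)
    (z : AdjoinRoot ((X : (ZMod 8)[X]) ^ e - C 2)) (hz : 2 * z = 0) : ∃ w, z = 4 * w := by
  obtain ⟨v, hv⟩ := AdjoinRoot.mk_surjective z
  haveI : Nontrivial (ZMod 8) := ⟨0, 1, by decide⟩
  set g : (ZMod 8)[X] := X ^ e - C 2 with hg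
  have hmonic : g.Monic := monic_X_pow_sub_C _ he
  set v₁ := v %ₘ g with hv1
  have hmk : AdjoinRoot.mk g v₁ = AdjoinRoot.mk g v := by
    conv_rhs => rw [← modByMonic_add_div v g]
    rw [map_add, map_mul, AdjoinRoot.mk_self, zero_mul, add_zero]
  have h2 : AdjoinRoot.mk g (2 * v₁) = 0 := by
    rw [map_mul, map_ofNat, hmk, hv]; exact hz
  have hdvd : g ∣ 2 * v₁ := (AdjoinRoot.mk_eq_zero).mp h2
  have hdeg : v₁.degree < g.degree := degree_modByMonic_lt v hmonic
  have h2v : (2 : (ZMod 8)[X]) * v₁ = 0 := by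
    obtain ⟨h, hh⟩ := hdvd
    rcases eq_or_ne h 0 with rfl | hne
    · simpa using hh
    · exfalso
      have hd1 : (2 * v₁).degree ≤ v₁.degree := by
        calc (2 * v₁).degree ≤ (2 : (ZMod 8)[X]).degree + v₁.degree := degree_mul_le _ _
        _ ≤ 0 + v₁.degree := by
            apply add_le_add_left
            rw [(map_ofNat (C : ZMod 8 →+* _) 2).symm]
            exact degree_C_le
        _ = v₁.degree := by rw [zero_add]
      have hd2 : g.degree ≤ (g * h).degree := by
        rw [mul_comm, hmonic.degree_mul]
        exact le_add_of_nonneg_left (zero_le_degree_iff.mpr hne)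
      rw [← hh] at hd2
      exact absurd (lt_of_le_of_lt (hd2.trans hd1) hdeg) (lt_irrefl _)
  have hco : ∀ i, (4 : ZMod 8) ∣ v₁.coeff i := by
    intro i
    have : (2 : ZMod 8) * v₁.coeff i = 0 := by
      have := congrArg (fun p => Polynomial.coeff p i) h2v
      simpa [(map_ofNat (C : ZMod 8 →+* _) 2).symm, coeff_C_mul] using this
    obtain ⟨b, hb⟩ := zmod8_exists_quarter _ this
    exact ⟨b, hb⟩
  obtain ⟨w, hw⟩ := (C_dvd_iff_dvd_coeff (4 : ZMod 8) v₁).mpr hco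
  refine ⟨AdjoinRoot.mk g w, ?_⟩
  rw [← hv, ← hmk, hw, map_mul, AdjoinRoot.mk_C]
  exact congrArg (· * (AdjoinRoot.mk g) w) (map_ofNat (AdjoinRoot.of g) 4)

private lemma adjoin_step (e k : ℕ) (hk : e = k + k) (hk1 : e ≠ 0) (p q r t u : (ZMod 8)[X])
    (hmain : p ^ 2 + q ^ 2 = X ^ (e+1) + ((X : (ZMod 8)[X]) ^ e - C 2) * r)
    (hstu : p + q = X ^ k * t + 2 * u) :
    ∃ w, (AdjoinRoot.mk ((X : (ZMod 8)[X]) ^ e - C 2) p) ^ 2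
        + (AdjoinRoot.mk ((X : (ZMod 8)[X]) ^ e - C 2) (t + X ^ k * u)) ^ 2
        - (AdjoinRoot.root ((X : (ZMod 8)[X]) ^ e - C 2)) ^ k
            * (AdjoinRoot.mk ((X : (ZMod 8)[X]) ^ e - C 2) p
               * AdjoinRoot.mk ((X : (ZMod 8)[X]) ^ e - C 2) (t + X ^ k * u))
      = AdjoinRoot.root ((X : (ZMod 8)[X]) ^ e - C 2) + 4 * w := by
  have hρe : (AdjoinRoot.root ((X : (ZMod 8)[X]) ^ e - C 2)) ^ e = 2 := by
    have h0 : AdjoinRoot.mk ((X : (ZMod 8)[X]) ^ e - C 2) ((X : (ZMod 8)[X]) ^ e - C 2) = 0 :=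
      AdjoinRoot.mk_self
    rw [map_sub, map_pow, AdjoinRoot.mk_X, AdjoinRoot.mk_C, sub_eq_zero] at h0
    rw [h0]
    exact map_ofNat (AdjoinRoot.of _) 2
  have hsT : AdjoinRoot.mk ((X : (ZMod 8)[X]) ^ e - C 2) (p + q)
      = (AdjoinRoot.root ((X : (ZMod 8)[X]) ^ e - C 2)) ^ k
        * AdjoinRoot.mk ((X : (ZMod 8)[X]) ^ e - C 2) (t + X ^ k * u) := by
    rw [hstu]
    simp only [map_add, map_mul, map_pow, map_ofNat, AdjoinRoot.mk_X]
    rw [show (2 : AdjoinRoot ((X : (ZMod 8)[X]) ^ e - C 2))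
        = AdjoinRoot.root _ ^ k * AdjoinRoot.root _ ^ k from by rw [← pow_add, ← hk, hρe]]
    ring
  have h2T : 2 * ((AdjoinRoot.mk ((X : (ZMod 8)[X]) ^ e - C 2) (t + X ^ k * u)) ^ 2
      - AdjoinRoot.root ((X : (ZMod 8)[X]) ^ e - C 2)
      - AdjoinRoot.mk ((X : (ZMod 8)[X]) ^ e - C 2) p
        * AdjoinRoot.mk ((X : (ZMod 8)[X]) ^ e - C 2) q) = 0 := by
    have h1 := congrArg (AdjoinRoot.mk ((X : (ZMod 8)[X]) ^ e - C 2)) hmain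
    simp only [map_add, map_mul, map_pow, map_sub, AdjoinRoot.mk_X, AdjoinRoot.mk_C] at h1
    rw [show ((AdjoinRoot.of ((X : (ZMod 8)[X]) ^ e - C 2)) (2 : ZMod 8)
        = (2 : AdjoinRoot ((X : (ZMod 8)[X]) ^ e - C 2))) from map_ofNat _ 2] at h1
    rw [show (AdjoinRoot.root ((X : (ZMod 8)[X]) ^ e - C 2)) ^ (e + 1)
        = (AdjoinRoot.root ((X : (ZMod 8)[X]) ^ e - C 2)) ^ e
          * AdjoinRoot.root ((X : (ZMod 8)[X]) ^ e - C 2) from pow_succ _ _, hρe] at h1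
    have h3 : ((AdjoinRoot.root ((X : (ZMod 8)[X]) ^ e - C 2)) ^ k) ^ 2
        = (2 : AdjoinRoot ((X : (ZMod 8)[X]) ^ e - C 2)) := by
      rw [← pow_mul, show k * 2 = e from by omega, hρe]
    have h4 : (AdjoinRoot.mk ((X : (ZMod 8)[X]) ^ e - C 2) p
        + AdjoinRoot.mk ((X : (ZMod 8)[X]) ^ e - C 2) q) ^ 2
        = 2 * (AdjoinRoot.mk ((X : (ZMod 8)[X]) ^ e - C 2) (t + X ^ k * u)) ^ 2 := by
      rw [← map_add, hsT, mul_pow, h3]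
    linear_combination h1 - h4
  obtain ⟨w, hw⟩ := two_torsion e hk1 _ h2T
  have hpq : AdjoinRoot.mk ((X : (ZMod 8)[X]) ^ e - C 2) p
      + AdjoinRoot.mk ((X : (ZMod 8)[X]) ^ e - C 2) q
      = (AdjoinRoot.root ((X : (ZMod 8)[X]) ^ e - C 2)) ^ k
        * AdjoinRoot.mk ((X : (ZMod 8)[X]) ^ e - C 2) (t + X ^ k * u) := by
    rw [← map_add]; exact hsT
  exact ⟨w, by linear_combination hw + (AdjoinRoot.mk ((X : (ZMod 8)[X]) ^ e - C 2) p) * hpq⟩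

private lemma pow_image {R : Type} [CommRing R] (m : Matrix (Fin 2) (Fin 2) R) (μ : R)
    (hm : m * m = μ • 1) : ∀ n : ℕ, ∃ a b : R, m ^ n = a • 1 + b • m := by
  intro n
  induction n with
  | zero => exact ⟨1, 0, by simp⟩
  | succ n ih =>
    obtain ⟨a, b, hab⟩ := ih
    refine ⟨b * μ, a, ?_⟩
    rw [pow_succ, hab, add_mul, smul_mul_assoc, smul_mul_assoc, one_mul, hm,
      smul_smul, add_comm]

private lemma eval_image {R : Type} [CommRing R] (m : Matrix (Fin 2) (Fin 2) R) (μ : R)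
    (hm : m * m = μ • 1) (σ : ZMod 8 →+* Matrix (Fin 2) (Fin 2) R)
    (hσ : ∀ a : ZMod 8, ∃ r : R, σ a = r • 1) (v : (ZMod 8)[X]) :
    ∃ a b : R, Polynomial.eval₂ σ m v = a • 1 + b • m := by
  induction v using Polynomial.induction_on' with
  | add p q hp hq =>
    obtain ⟨a₁, b₁, h₁⟩ := hp; obtain ⟨a₂, b₂, h₂⟩ := hq
    refine ⟨a₁ + a₂, b₁ + b₂, ?_⟩
    rw [eval₂_add, h₁, h₂, add_smul, add_smul]
    abel
  | monomial n c =>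
    obtain ⟨a, b, hab⟩ := pow_image m μ hm n
    obtain ⟨r, hr⟩ := hσ c
    refine ⟨r * a, r * b, ?_⟩
    rw [eval₂_monomial, hab, hr, smul_mul_assoc, one_mul, smul_add, smul_smul, smul_smul]

private def Mz4 : Matrix (Fin 2) (Fin 2) (ZMod 4) := !![0,2;1,0]

private lemma hMz4 : Mz4 * Mz4 = (2 : ZMod 4) • 1 := by decide

private lemma final4 : ∀ a b c d : ZMod 4,
    (a • (1 : Matrix (Fin 2) (Fin 2) (ZMod 4)) + b • Mz4) ^ 2 + (c • 1 + d • Mz4) ^ 2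
      - Mz4 * ((a • 1 + b • Mz4) * (c • 1 + d • Mz4)) ≠ Mz4 := by decide

private def Nz2 : Matrix (Fin 2) (Fin 2) (ZMod 2) := !![0,0;1,0]

private lemma hNz2 : Nz2 * Nz2 = (0 : ZMod 2) • 1 := by decide

private lemma final2 : ∀ a b c d : ZMod 2,
    (a • (1 : Matrix (Fin 2) (Fin 2) (ZMod 2)) + b • Nz2) ^ 2 + (c • 1 + d • Nz2) ^ 2 ≠ Nz2 := by
  decide

private lemma branch2 (e : ℕ) (hk : e = 1 + 1) (P T : (ZMod 8)[X])
    (w : AdjoinRoot ((X : (ZMod 8)[X]) ^ e - C 2))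
    (hE : (AdjoinRoot.mk ((X : (ZMod 8)[X]) ^ e - C 2) P) ^ 2
        + (AdjoinRoot.mk ((X : (ZMod 8)[X]) ^ e - C 2) T) ^ 2
        - (AdjoinRoot.root ((X : (ZMod 8)[X]) ^ e - C 2)) ^ 1
          * (AdjoinRoot.mk ((X : (ZMod 8)[X]) ^ e - C 2) P
             * AdjoinRoot.mk ((X : (ZMod 8)[X]) ^ e - C 2) T)
      = AdjoinRoot.root ((X : (ZMod 8)[X]) ^ e - C 2) + 4 * w) : False := by
  subst hk
  set σ4 : ZMod 8 →+* Matrix (Fin 2) (Fin 2) (ZMod 4) :=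
    (algebraMap (ZMod 4) _).comp (ZMod.castHom (by norm_num : (4:ℕ) ∣ 8) (ZMod 4)) with hσ4
  have hσ : ∀ a : ZMod 8, ∃ r : ZMod 4, σ4 a = r • 1 := fun a =>
    ⟨ZMod.castHom (by norm_num : (4:ℕ) ∣ 8) (ZMod 4) a,
      by rw [hσ4, RingHom.comp_apply]; exact Algebra.algebraMap_eq_smul_one _⟩
  have heval : Polynomial.eval₂ σ4 Mz4 ((X : (ZMod 8)[X]) ^ (1+1) - C 2) = 0 := by
    rw [eval₂_sub, eval₂_X_pow, eval₂_C]
    have h1 : σ4 (2 : ZMod 8) = (2 : ZMod 4) • 1 := by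
      rw [hσ4]
      show (algebraMap (ZMod 4) _) ((ZMod.castHom _ (ZMod 4)) (2 : ZMod 8)) = _
      rw [show ((ZMod.castHom (by norm_num : (4:ℕ) ∣ 8) (ZMod 4)) (2 : ZMod 8)) = (2 : ZMod 4)
        from by decide]
      exact Algebra.algebraMap_eq_smul_one _
    rw [h1, pow_succ, pow_one, hMz4, sub_self]
  have hcomm : ∀ a : ZMod 8, Commute (σ4 a) Mz4 := by
    intro a
    obtain ⟨r, hr⟩ := hσ a
    rw [hr]
    show _ * _ = _ * _
    rw [smul_mul_assoc, one_mul, mul_smul_comm, mul_one]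
  have H : ∀ a ∈ Ideal.span {((X : (ZMod 8)[X]) ^ (1+1) - C 2)},
      eval₂RingHom' σ4 Mz4 hcomm a = 0 := by
    intro a ha
    rw [Ideal.mem_span_singleton] at ha
    obtain ⟨c, rfl⟩ := ha
    rw [map_mul]
    have : eval₂RingHom' σ4 Mz4 hcomm ((X : (ZMod 8)[X]) ^ (1+1) - C 2) = 0 := heval
    rw [this, zero_mul]
  set ψ : AdjoinRoot ((X : (ZMod 8)[X]) ^ (1+1) - C 2) →+* Matrix (Fin 2) (Fin 2) (ZMod 4) :=
    by exact Ideal.Quotient.lift _ (eval₂RingHom' σ4 Mz4 hcomm) H with hψ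
  have hmk : ∀ v : (ZMod 8)[X], ψ (AdjoinRoot.mk _ v) = Polynomial.eval₂ σ4 Mz4 v :=
    fun v => Ideal.Quotient.lift_mk _ _ _
  have hroot : ψ (AdjoinRoot.root ((X : (ZMod 8)[X]) ^ (1+1) - C 2)) = Mz4 := by
    rw [← AdjoinRoot.mk_X, hmk, eval₂_X]
  have h4 : (4 : Matrix (Fin 2) (Fin 2) (ZMod 4)) = 0 := by decide
  have hEm := congrArg ψ hE
  simp only [map_add, map_sub, map_mul, map_pow, map_ofNat, hroot, pow_one] at hEm
  rw [h4, zero_mul, add_zero] at hEm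
  obtain ⟨a, b, hab⟩ := eval_image Mz4 _ hMz4 σ4 hσ P
  obtain ⟨c, d, hcd⟩ := eval_image Mz4 _ hMz4 σ4 hσ T
  rw [hmk, hmk, hab, hcd] at hEm
  exact final4 a b c d hEm

private lemma branch4 (e k : ℕ) (hk : e = k + k) (hk2 : 2 ≤ k) (P T : (ZMod 8)[X])
    (w : AdjoinRoot ((X : (ZMod 8)[X]) ^ e - C 2))
    (hE : (AdjoinRoot.mk ((X : (ZMod 8)[X]) ^ e - C 2) P) ^ 2
        + (AdjoinRoot.mk ((X : (ZMod 8)[X]) ^ e - C 2) T) ^ 2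
        - (AdjoinRoot.root ((X : (ZMod 8)[X]) ^ e - C 2)) ^ k
          * (AdjoinRoot.mk ((X : (ZMod 8)[X]) ^ e - C 2) P
             * AdjoinRoot.mk ((X : (ZMod 8)[X]) ^ e - C 2) T)
      = AdjoinRoot.root ((X : (ZMod 8)[X]) ^ e - C 2) + 4 * w) : False := by
  set σ2 : ZMod 8 →+* Matrix (Fin 2) (Fin 2) (ZMod 2) :=
    (algebraMap (ZMod 2) _).comp (ZMod.castHom (by norm_num : (2:ℕ) ∣ 8) (ZMod 2)) with hσ2
  have hσ : ∀ a : ZMod 8, ∃ r : ZMod 2, σ2 a = r • 1 := fun a =>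
    ⟨ZMod.castHom (by norm_num : (2:ℕ) ∣ 8) (ZMod 2) a,
      by rw [hσ2, RingHom.comp_apply]; exact Algebra.algebraMap_eq_smul_one _⟩
  have hN2 : Nz2 ^ 2 = 0 := by decide
  have heval : Polynomial.eval₂ σ2 Nz2 ((X : (ZMod 8)[X]) ^ e - C 2) = 0 := by
    rw [eval₂_sub, eval₂_X_pow, eval₂_C]
    have h1 : σ2 (2 : ZMod 8) = 0 := by
      rw [hσ2]
      show (algebraMap (ZMod 2) _) ((ZMod.castHom _ (ZMod 2)) (2 : ZMod 8)) = _
      rw [show ((ZMod.castHom (by norm_num : (2:ℕ) ∣ 8) (ZMod 2)) (2 : ZMod 8)) = (0 : ZMod 2)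
        from by decide]
      exact map_zero _
    have h2 : Nz2 ^ e = 0 := by
      rw [show e = 2 + (e - 2) from by omega, pow_add, hN2, zero_mul]
    rw [h1, h2, sub_zero]
  have hcomm : ∀ a : ZMod 8, Commute (σ2 a) Nz2 := by
    intro a
    obtain ⟨r, hr⟩ := hσ a
    rw [hr]
    show _ * _ = _ * _
    rw [smul_mul_assoc, one_mul, mul_smul_comm, mul_one]
  have H : ∀ a ∈ Ideal.span {((X : (ZMod 8)[X]) ^ e - C 2)},
      eval₂RingHom' σ2 Nz2 hcomm a = 0 := by
    intro a ha
    rw [Ideal.mem_span_singleton] at ha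
    obtain ⟨c, rfl⟩ := ha
    rw [map_mul]
    have : eval₂RingHom' σ2 Nz2 hcomm ((X : (ZMod 8)[X]) ^ e - C 2) = 0 := heval
    rw [this, zero_mul]
  set ψ : AdjoinRoot ((X : (ZMod 8)[X]) ^ e - C 2) →+* Matrix (Fin 2) (Fin 2) (ZMod 2) :=
    by exact Ideal.Quotient.lift _ (eval₂RingHom' σ2 Nz2 hcomm) H with hψ
  have hmk : ∀ v : (ZMod 8)[X], ψ (AdjoinRoot.mk _ v) = Polynomial.eval₂ σ2 Nz2 v :=
    fun v => Ideal.Quotient.lift_mk _ _ _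
  have hroot : ψ (AdjoinRoot.root ((X : (ZMod 8)[X]) ^ e - C 2)) = Nz2 := by
    rw [← AdjoinRoot.mk_X, hmk, eval₂_X]
  have h4 : (4 : Matrix (Fin 2) (Fin 2) (ZMod 2)) = 0 := by decide
  have hNk : Nz2 ^ k = 0 := by
    rw [show k = 2 + (k - 2) from by omega, pow_add, hN2, zero_mul]
  have hEm := congrArg ψ hE
  simp only [map_add, map_sub, map_mul, map_pow, map_ofNat, hroot] at hEm
  rw [h4, zero_mul, add_zero, hNk, zero_mul, sub_zero] at hEm
  obtain ⟨a, b, hab⟩ := eval_image Nz2 _ hNz2 σ2 hσ P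
  obtain ⟨c, d, hcd⟩ := eval_image Nz2 _ hNz2 σ2 hσ T
  rw [hmk, hmk, hab, hcd] at hEm
  exact final2 a b c d hEm

private lemma dvd_sqrt {k : ℕ} {s : (ZMod 2)[X]} (h : X ^ (k + k) ∣ s * s) : X ^ k ∣ s := by
  rcases eq_or_ne s 0 with rfl | hs
  · exact dvd_zero _
  · rw [X_pow_dvd_iff]
    intro d hd
    apply coeff_eq_zero_of_lt_natTrailingDegree
    have h1 : k + k ≤ (s * s).natTrailingDegree :=
      le_natTrailingDegree (mul_ne_zero hs hs) (fun m hm => (X_pow_dvd_iff.mp h) m hm)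
    rw [natTrailingDegree_mul hs hs] at h1
    omega

/-- For even `e ≥ 2`, with `ω = 2^(1/e)`, the element `2ω = ω^(e+1)` of `ℤ_2[2^(1/e)]`
is not a sum of two squares. -/
theorem omega_e_succ_not_sum_two_squares (e : ℕ) (he2 : Even e) (he : 2 ≤ e) :
    ¬ ∃ x y : Z2RootTwo e, x ^ 2 + y ^ 2 = (AdjoinRoot.root _ : Z2RootTwo e) ^ (e + 1) := by
  rintro ⟨x, y, hxy⟩
  obtain ⟨k, hk⟩ := he2
  -- Step A : lift to polynomials over ℤ_[2]
  obtain ⟨P, hP⟩ := AdjoinRoot.mk_surjective x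
  obtain ⟨Q, hQ⟩ := AdjoinRoot.mk_surjective y
  have hmk0 : AdjoinRoot.mk ((X : ℤ_[2][X]) ^ e - C 2) (P ^ 2 + Q ^ 2 - X ^ (e+1)) = 0 := by
    rw [map_sub, map_add, map_pow, map_pow, map_pow, AdjoinRoot.mk_X, hP, hQ, hxy, sub_self]
  obtain ⟨R, hR⟩ := (AdjoinRoot.mk_eq_zero).mp hmk0
  have hR' : P ^ 2 + Q ^ 2 = X ^ (e+1) + ((X : ℤ_[2][X]) ^ e - C 2) * R := by
    linear_combination hR
  -- Step B : map to (ZMod 8)[X]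
  have hex : ∃ p q r : (ZMod 8)[X],
      p ^ 2 + q ^ 2 = X ^ (e+1) + ((X : (ZMod 8)[X]) ^ e - C 2) * r := by
    set π : ℤ_[2] →+* ZMod 8 :=
      (ZMod.castHom (by norm_num : (8:ℕ) ∣ 2 ^ 3) (ZMod 8)).comp (PadicInt.toZModPow 3) with hπ
    refine ⟨P.map π, Q.map π, R.map π, ?_⟩
    have h := congrArg (Polynomial.map π) hR'
    simp only [Polynomial.map_add, Polynomial.map_pow, Polynomial.map_mul, Polynomial.map_sub,
      Polynomial.map_X, Polynomial.map_C, Polynomial.map_ofNat, map_ofNat] at h ⊢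
    exact h
  obtain ⟨p, q, r, hmain⟩ := hex
  have hC2 : (C (2:ZMod 8) : (ZMod 8)[X]) = 2 := map_ofNat (C : ZMod 8 →+* _) 2
  -- Step C/D : s = p + q has low coefficients divisible by 2
  have hs2 : (p + q) ^ 2 = X ^ (e+1) + ((X : (ZMod 8)[X]) ^ e - C 2) * r + C 2 * (p * q) := by
    linear_combination hmain - (p * q) * hC2
  have hsdvd : (X : (ZMod 2)[X]) ^ (k + k)
      ∣ ((p + q).map (ZMod.castHom (by norm_num : (2:ℕ) ∣ 8) (ZMod 2)))
        * ((p + q).map (ZMod.castHom (by norm_num : (2:ℕ) ∣ 8) (ZMod 2))) := by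
    refine ⟨X + r.map (ZMod.castHom (by norm_num : (2:ℕ) ∣ 8) (ZMod 2)), ?_⟩
    have h := congrArg (Polynomial.map (ZMod.castHom (by norm_num : (2:ℕ) ∣ 8) (ZMod 2))) hs2
    simp only [Polynomial.map_pow, Polynomial.map_add, Polynomial.map_mul, Polynomial.map_sub,
      Polynomial.map_X, Polynomial.map_C] at h
    rw [show (ZMod.castHom (by norm_num : (2:ℕ) ∣ 8) (ZMod 2)) (2 : ZMod 8) = 0 from by decide,
      map_zero] at h
    rw [← pow_two, Polynomial.map_add, h, ← hk]
    ring
  have hcoeffs : ∀ i, i < k → ∃ b, (p + q).coeff i = 2 * b := by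
    intro i hi
    have hz : (((p + q).map (ZMod.castHom (by norm_num : (2:ℕ) ∣ 8) (ZMod 2)))).coeff i = 0 :=
      (X_pow_dvd_iff.mp (dvd_sqrt hsdvd)) i hi
    rw [Polynomial.coeff_map] at hz
    exact zmod8_exists_half _ hz
  obtain ⟨t, u, hstu⟩ := exists_decomp k (p + q) hcoeffs
  obtain ⟨w, hE⟩ := adjoin_step e k hk (by omega) p q r t u hmain hstu
  rcases Nat.lt_or_ge k 2 with hsmall | hbig
  · have hk1 : k = 1 := by omega
    subst hk1
    exact branch2 e hk p (t + X ^ 1 * u) w hE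
  · exact branch4 e k hk hbig p (t + X ^ k * u) w hE
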